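/- Let s_i, s_{i+1} be adjacent transpositions in the group algebra \u2102[S_n] and let v, w be complex numbers with w \u2260 v and w \u2260 v \u00b1 1. Then for u = v + 1 (respectively u = v - 1), the product (s_{i+1} + 1/(u-v))(s_i + 1/(u-w))(s_{i+1} + 1/(v-w)) equals (s_{i+1} + 1)(s_i s_{i+1} + (s_i + 1)/(v-w)) (respectively (s_{i+1} - 1)(s_i s_{i+1} + (s_i - 1)/(v-w))); in particular this expression is regular at w = u, i.e., it extends to w = v \u00b1 1. -/
import Mathlib

lemma aux1 {R : Type*} [Ring R] [Algebra ℂ R] (a b : R) (ha : a * a = 1)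
    (c d : ℂ) (hcd : c + c * d = d) :
    (a + 1) * (b + c • (1:R)) * (a + d • 1) = (a + 1) * (b * a + d • (b + 1)) := by
  have haa : ∀ x : R, a * (a * x) = x := by
    intro x; rw [← mul_assoc, ha, one_mul]
  simp only [mul_add, add_mul, smul_mul_assoc, mul_smul_comm, smul_smul, one_mul, mul_one,
    mul_assoc, ha, haa, smul_add]
  match_scalars <;> first
    | linear_combination hcd | linear_combination -hcd
    | linear_combination 2*hcd | linear_combination -2*hcd | ring1

lemma aux2 {R : Type*} [Ring R] [Algebra ℂ R] (a b : R) (ha : a * a = 1)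
    (c d : ℂ) (hcd : c = c * d + d) :
    (a - 1) * (b + c • (1:R)) * (a + d • 1) = (a - 1) * (b * a + d • (b - 1)) := by
  have haa : ∀ x : R, a * (a * x) = x := by
    intro x; rw [← mul_assoc, ha, one_mul]
  simp only [mul_add, add_mul, sub_mul, mul_sub, smul_mul_assoc, mul_smul_comm, smul_smul,
    one_mul, mul_one, mul_assoc, ha, haa, smul_add, smul_sub]
  match_scalars <;> first
    | linear_combination hcd | linear_combination -hcd
    | linear_combination 2*hcd | linear_combination -2*hcd | ring1

theorem triple_product_regular (n i : ℕ) (h : i + 2 < n) (v w : ℂ)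
    (hw1 : w ≠ v) (hw2 : w ≠ v + 1) (hw3 : w ≠ v - 1) :
    ((MonoidAlgebra.of ℂ (Equiv.Perm (Fin n))
        (Equiv.swap ⟨i + 1, by omega⟩ ⟨i + 2, h⟩) + ((v + 1) - v)⁻¹ • 1) *
      (MonoidAlgebra.of ℂ (Equiv.Perm (Fin n))
        (Equiv.swap ⟨i, by omega⟩ ⟨i + 1, by omega⟩) + ((v + 1) - w)⁻¹ • 1) *
      (MonoidAlgebra.of ℂ (Equiv.Perm (Fin n))
        (Equiv.swap ⟨i + 1, by omega⟩ ⟨i + 2, h⟩) + (v - w)⁻¹ • 1) =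
    (MonoidAlgebra.of ℂ (Equiv.Perm (Fin n))
        (Equiv.swap ⟨i + 1, by omega⟩ ⟨i + 2, h⟩) + 1) *
      (MonoidAlgebra.of ℂ (Equiv.Perm (Fin n)) (Equiv.swap ⟨i, by omega⟩ ⟨i + 1, by omega⟩) *
        MonoidAlgebra.of ℂ (Equiv.Perm (Fin n)) (Equiv.swap ⟨i + 1, by omega⟩ ⟨i + 2, h⟩) +
        (v - w)⁻¹ • (MonoidAlgebra.of ℂ (Equiv.Perm (Fin n))
          (Equiv.swap ⟨i, by omega⟩ ⟨i + 1, by omega⟩) + 1)))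
    ∧
    ((MonoidAlgebra.of ℂ (Equiv.Perm (Fin n))
        (Equiv.swap ⟨i + 1, by omega⟩ ⟨i + 2, h⟩) + ((v - 1) - v)⁻¹ • 1) *
      (MonoidAlgebra.of ℂ (Equiv.Perm (Fin n))
        (Equiv.swap ⟨i, by omega⟩ ⟨i + 1, by omega⟩) + ((v - 1) - w)⁻¹ • 1) *
      (MonoidAlgebra.of ℂ (Equiv.Perm (Fin n))
        (Equiv.swap ⟨i + 1, by omega⟩ ⟨i + 2, h⟩) + (v - w)⁻¹ • 1) =
    (MonoidAlgebra.of ℂ (Equiv.Perm (Fin n))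
        (Equiv.swap ⟨i + 1, by omega⟩ ⟨i + 2, h⟩) - 1) *
      (MonoidAlgebra.of ℂ (Equiv.Perm (Fin n)) (Equiv.swap ⟨i, by omega⟩ ⟨i + 1, by omega⟩) *
        MonoidAlgebra.of ℂ (Equiv.Perm (Fin n)) (Equiv.swap ⟨i + 1, by omega⟩ ⟨i + 2, h⟩) +
        (v - w)⁻¹ • (MonoidAlgebra.of ℂ (Equiv.Perm (Fin n))
          (Equiv.swap ⟨i, by omega⟩ ⟨i + 1, by omega⟩) - 1))) := by
  set a : MonoidAlgebra ℂ (Equiv.Perm (Fin n)) :=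
    MonoidAlgebra.of ℂ (Equiv.Perm (Fin n)) (Equiv.swap ⟨i + 1, by omega⟩ ⟨i + 2, h⟩) with ha_def
  set b : MonoidAlgebra ℂ (Equiv.Perm (Fin n)) :=
    MonoidAlgebra.of ℂ (Equiv.Perm (Fin n)) (Equiv.swap ⟨i, by omega⟩ ⟨i + 1, by omega⟩)
  have ha : a * a = 1 := by
    rw [ha_def, ← map_mul, Equiv.swap_mul_self, map_one]
  have hv : v - w ≠ 0 := sub_ne_zero.mpr (Ne.symm hw1)
  have hv1 : v + 1 - w ≠ 0 := fun hc => hw2 (by linear_combination -hc)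
  have hv2 : v - 1 - w ≠ 0 := fun hc => hw3 (by linear_combination -hc)
  constructor
  · have e1 : ((v + 1) - v)⁻¹ • (1 : MonoidAlgebra ℂ (Equiv.Perm (Fin n))) = 1 := by
      norm_num
    rw [e1]
    exact aux1 a b ha _ _ (by field_simp; ring_nf; try tauto)
  · have e2 : a + ((v - 1) - v)⁻¹ • (1 : MonoidAlgebra ℂ (Equiv.Perm (Fin n))) = a - 1 := by
      norm_num [sub_eq_add_neg]
    rw [e2]
    exact aux2 a b ha _ _ (by field_simp; ring_nf; try tauto)
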